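/- arXiv:1308.2088 — 3 statements merged into one kernel-verified Lean document; each statement's English description precedes it below -/
import Mathlib

section
/- Let p be a prime, n ≥ 1, and let b_1,...,b_n be integers each coprime to p. Define 𝔟 : {0,...,p^n−1} → ℤ by 𝔟(s) = Σ_{i=1}^n s_{(n−i)} p^{n−i} b_i, where s = Σ_{i=1}^n s_{(n−i)} p^{n−i} is the base-p expansion of s. Then the map s ↦ 𝔟(s) mod p^n is a bijection from {0,...,p^n−1} to ℤ/p^nℤ. -/
/-- The `i`-th base-`p` digit of `s`. -/
def dig (p s i : ℕ) : ℕ := s / p ^ i % p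

/-- The function 𝔟(s) = Σ_{i=1}^n s_{(n−i)} p^{n−i} b_i. -/
def bfun (p n : ℕ) (b : ℕ → ℤ) (s : ℕ) : ℤ :=
  ∑ i ∈ Finset.Icc 1 n, (dig p s (n - i) : ℤ) * (p : ℤ) ^ (n - i) * b i

/-!
Since the `b i` are units mod `p`, the value of 𝔟(s) mod `p` determines the lowest base-`p` digit
of `s`; subtracting it and dividing by `p` leaves the same kind of sum for `s / p`, one power of `p`
lower. By induction the map is injective on `{0, …, p ^ n - 1}`, and both sides have `p ^ n`
elements.
-/

open Finset

lemma dig_zero (p s : ℕ) : dig p s 0 = s % p := by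
  simp [dig]

lemma dig_succ (p s j : ℕ) : dig p s (j + 1) = dig p (s / p) j := by
  simp [dig, Nat.div_div_eq_div_mul, pow_succ, mul_comm]

lemma dig_lt {p : ℕ} (hp : 0 < p) (s j : ℕ) : dig p s j < p :=
  Nat.mod_lt _ hp

def weightedDigitSum (p : ℕ) (c : ℕ → ℤ) (n s : ℕ) : ℤ :=
  ∑ j ∈ range n, (dig p s j : ℤ) * (p : ℤ) ^ j * c j

lemma weightedDigitSum_succ (p : ℕ) (c : ℕ → ℤ) (n s : ℕ) :
    weightedDigitSum p c (n + 1) s =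
      dig p s 0 * c 0 + p * weightedDigitSum p (fun j => c (j + 1)) n (s / p) := by
  simp only [weightedDigitSum, sum_range_succ', mul_sum, dig_succ, pow_succ]
  rw [add_comm]
  congr 1
  · simp
  · exact sum_congr rfl fun _ _ => by ring

lemma eq_of_mul_add_modEq {p d d' : ℕ} {c x y : ℤ} (hc : IsCoprime c p) (hd : d < p)
    (hd' : d' < p) (h : d * c + p * x ≡ d' * c + p * y [ZMOD p]) : d = d' := by
  have hdc : d * c ≡ d' * c [ZMOD p] := by
    simpa only [Int.ModEq, Int.add_mul_emod_self_left] using h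
  have hdd : (d : ℤ) ≡ d' [ZMOD p] := by
    rw [Int.modEq_iff_dvd, ← sub_mul] at hdc
    exact Int.modEq_iff_dvd.mpr (hc.symm.dvd_of_dvd_mul_right hdc)
  exact (Int.natCast_modEq_iff.mp hdd).eq_of_lt_of_lt hd hd'

lemma eq_of_weightedDigitSum_modEq {p : ℕ} {c : ℕ → ℤ} {n s t : ℕ}
    (hc : ∀ j < n, IsCoprime (c j) p) (hs : s < p ^ n) (ht : t < p ^ n)
    (h : weightedDigitSum p c n s ≡ weightedDigitSum p c n t [ZMOD p ^ n]) : s = t := by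
  induction n generalizing c s t with
  | zero => simp only [pow_zero] at hs ht; omega
  | succ n ih =>
    have hp : 0 < p := Nat.pos_of_ne_zero (by rintro rfl; simp at hs)
    rw [weightedDigitSum_succ, weightedDigitSum_succ] at h
    have hdig : dig p s 0 = dig p t 0 :=
      eq_of_mul_add_modEq (hc 0 n.succ_pos) (dig_lt hp _ _) (dig_lt hp _ _)
        (h.of_dvd (dvd_pow_self _ n.succ_ne_zero))
    rw [hdig, pow_succ'] at h
    have hdiv : s / p = t / p := by
      refine ih (fun j hj => hc (j + 1) (by omega)) ?_ ?_
        ((h.add_left_cancel' _).mul_left_cancel' (by exact_mod_cast hp.ne'))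
      · exact Nat.div_lt_of_lt_mul (by rwa [← pow_succ'])
      · exact Nat.div_lt_of_lt_mul (by rwa [← pow_succ'])
    rw [dig_zero, dig_zero] at hdig
    rw [← Nat.div_add_mod s p, ← Nat.div_add_mod t p, hdiv, hdig]

lemma bfun_eq_weightedDigitSum (p n : ℕ) (b : ℕ → ℤ) (s : ℕ) :
    bfun p n b s = weightedDigitSum p (fun j => b (n - j)) n s := by
  refine sum_nbij' (n - ·) (n - ·) ?_ ?_ ?_ ?_ ?_ <;> intro i hi <;>
    simp only [mem_Icc, mem_range] at hi ⊢
  all_goals first | omega | rw [Nat.sub_sub_self hi.2]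

theorem stmt_2_general (p n : ℕ) (hp : p.Prime) (b : ℕ → ℤ)
    (hb : ∀ i ∈ Finset.Icc 1 n, IsCoprime (b i) (p : ℤ)) :
    Function.Bijective
      (fun s : Fin (p ^ n) => ((bfun p n b s : ℤ) : ZMod (p ^ n))) := by
  have : NeZero (p ^ n) := ⟨pow_ne_zero n hp.ne_zero⟩
  refine (Fintype.bijective_iff_injective_and_card _).mpr ⟨fun s t hst => Fin.ext ?_, by simp⟩
  have hc : ∀ j < n, IsCoprime (b (n - j)) p := fun j hj => hb _ (mem_Icc.mpr (by omega))
  refine eq_of_weightedDigitSum_modEq hc s.isLt t.isLt ?_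
  rw [← bfun_eq_weightedDigitSum, ← bfun_eq_weightedDigitSum]
  exact_mod_cast (ZMod.intCast_eq_intCast_iff _ _ _).mp hst

theorem stmt_2 (p n : ℕ) (hp : p.Prime) (hn : 1 ≤ n) (b : ℕ → ℤ)
    (hb : ∀ i ∈ Finset.Icc 1 n, IsCoprime (b i) (p : ℤ)) :
    Function.Bijective
      (fun s : Fin (p ^ n) => ((bfun p n b s : ℤ) : ZMod (p ^ n))) :=
  stmt_2_general p n hp b hb
end

section
/- Let p be prime and n ≥ 1. In the weakly ramified setting with u > k ≥ p^n/2 and j = v_p(u), one has: u belongs to the set 𝔇 (equivalently, d(u−s) = 0 for all 0 ≺ s ⪯ u, with d(t) = [t ≥ m], m < k) if and only if u − p^j < m; moreover u − p^j < m < u holds if and only if u = ⌈m/p^j⌉·p^j and v_p(m) < j. -/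
/-- Digitwise partial order on base-`p` expansions: `s ⪯ t`. -/
def preceq (p s t : ℕ) : Prop := ∀ i, dig p s i ≤ dig p t i

theorem pow_dvd_iff_forall_dig_eq_zero {p s j : ℕ} :
    p ^ j ∣ s ↔ ∀ i < j, dig p s i = 0 := by
  induction j with
  | zero => simp
  | succ j ih =>
    constructor
    · intro h i hi
      have hj : p ^ j ∣ s := (pow_dvd_pow p j.le_succ).trans h
      rcases Nat.lt_succ_iff_lt_or_eq.1 hi with hi | rfl
      · exact ih.1 hj i hi
      · exact Nat.mod_eq_zero_of_dvd <| (Nat.dvd_div_iff_mul_dvd hj).2 (pow_succ p i ▸ h)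
    · intro h
      have hj := ih.2 fun i hi => h i (hi.trans j.lt_succ_self)
      rw [pow_succ, ← Nat.dvd_div_iff_mul_dvd hj]
      exact Nat.dvd_of_mod_eq_zero (h j j.lt_succ_self)

theorem dig_pow_self {p i j : ℕ} (hp : 1 < p) : dig p (p ^ j) i = if i = j then 1 else 0 := by
  split_ifs with hij
  · subst hij
    simp [dig, Nat.div_self (pow_pos (zero_lt_one.trans hp) i), Nat.mod_eq_of_lt hp]
  rcases lt_or_gt_of_ne hij with hij | hij
  · exact pow_dvd_iff_forall_dig_eq_zero.1 dvd_rfl i hij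
  · simp [dig, Nat.div_eq_of_lt (Nat.pow_lt_pow_right hp hij)]

theorem preceq_pow_of_dig_ne_zero {p u j : ℕ} (hp : 1 < p) (h : dig p u j ≠ 0) :
    preceq p (p ^ j) u := by
  intro i
  rw [dig_pow_self hp]
  split_ifs with hij
  · subst hij; omega
  · exact Nat.zero_le _

theorem dig_padicValNat_ne_zero {p u : ℕ} (hp : p ≠ 1) (hu : u ≠ 0) :
    dig p u (padicValNat p u) ≠ 0 := by
  intro h
  have hdvd : p ^ (padicValNat p u + 1) ∣ u := by
    refine pow_dvd_iff_forall_dig_eq_zero.2 fun i hi => ?_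
    rcases Nat.lt_succ_iff_lt_or_eq.1 hi with hi | rfl
    · exact pow_dvd_iff_forall_dig_eq_zero.1 pow_padicValNat_dvd i hi
    · exact h
  rw [padicValNat_dvd_iff_le_of_ne_one hp hu] at hdvd
  omega

theorem pow_dvd_of_preceq {p s u j : ℕ} (hsu : preceq p s u) (hju : p ^ j ∣ u) : p ^ j ∣ s :=
  pow_dvd_iff_forall_dig_eq_zero.2 fun i hi =>
    Nat.eq_zero_of_le_zero <| (hsu i).trans_eq (pow_dvd_iff_forall_dig_eq_zero.1 hju i hi)

theorem forall_preceq_sub_lt_iff {p u N m : ℕ} (hp : 1 < p) (hu : u ≠ 0) (huN : u < N) :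
    (∀ s, s < N → s ≠ 0 → preceq p s u → u - s < m) ↔ u - p ^ padicValNat p u < m := by
  have hle : p ^ padicValNat p u ≤ u := Nat.le_of_dvd (Nat.pos_of_ne_zero hu) pow_padicValNat_dvd
  constructor
  · intro h
    exact h _ (hle.trans_lt huN) (pow_ne_zero _ (by omega))
      (preceq_pow_of_dig_ne_zero hp (dig_padicValNat_ne_zero hp.ne' hu))
  · intro h s _ hs hsu
    have : p ^ padicValNat p u ≤ s :=
      Nat.le_of_dvd (Nat.pos_of_ne_zero hs) (pow_dvd_of_preceq hsu pow_padicValNat_dvd)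
    omega

theorem Nat.ceilDiv_eq_iff {q m w : ℕ} (hq : 0 < q) (hw : w ≠ 0) :
    m ⌈/⌉ q = w ↔ q * w - q < m ∧ m ≤ q * w := by
  have hlo : w ≤ m ⌈/⌉ q ↔ q * (w - 1) < m := by
    rw [← not_le, ← ceilDiv_le_iff_le_mul hq]
    omega
  rw [le_antisymm_iff, ceilDiv_le_iff_le_mul hq, hlo, Nat.mul_sub_one, and_comm]

theorem Nat.sub_lt_and_lt_iff_eq_mul_ceilDiv {q u m : ℕ} (hq : 0 < q) (hqu : q ∣ u) :
    (u - q < m ∧ m < u) ↔ u = q * (m ⌈/⌉ q) ∧ ¬ q ∣ m := by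
  obtain ⟨w, rfl⟩ := hqu
  rcases eq_or_ne w 0 with rfl | hw
  · simp only [mul_zero, zero_tsub, not_lt_zero, and_false, false_iff, not_and_not_right]
    intro h
    have h0 : m ⌈/⌉ q = 0 := by simpa [hq.ne'] using h.symm
    rw [Nat.le_zero.1 ((ceilDiv_le_iff_le_mul hq).1 h0.le)]
    exact dvd_zero q
  rw [Nat.mul_left_cancel_iff hq, eq_comm, Nat.ceilDiv_eq_iff hq hw]
  constructor
  · rintro ⟨hlo, hhi⟩
    refine ⟨⟨hlo, hhi.le⟩, ?_⟩
    rintro ⟨c, rfl⟩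
    rw [← Nat.mul_sub_one] at hlo
    have := Nat.lt_of_mul_lt_mul_left hlo
    have := Nat.lt_of_mul_lt_mul_left hhi
    omega
  · rintro ⟨⟨hlo, hle⟩, hndvd⟩
    exact ⟨hlo, hle.lt_of_ne fun h => hndvd (h ▸ dvd_mul_right q w)⟩

theorem stmt_14_general (p n : ℕ) (hp : p.Prime)
    (m k u : ℕ) (hm : 0 < m)
    (hku : k < u) (hu : u < p ^ n)
    (j : ℕ) (hj : j = padicValNat p u) :
    ((∀ s, s < p ^ n → s ≠ 0 → preceq p s u → u - s < m) ↔ u - p ^ j < m) ∧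
    ((u - p ^ j < m ∧ m < u) ↔
      (u = p ^ j * ((m + p ^ j - 1) / p ^ j) ∧ padicValNat p m < j)) := by
  subst hj
  have hu0 : u ≠ 0 := by omega
  refine ⟨forall_preceq_sub_lt_iff hp.one_lt hu0 hu, ?_⟩
  rw [← Nat.ceilDiv_eq_add_pred_div,
    Nat.sub_lt_and_lt_iff_eq_mul_ceilDiv (pow_pos hp.pos _) pow_padicValNat_dvd,
    padicValNat_dvd_iff_le_of_ne_one hp.ne_one hm.ne', not_le]

theorem stmt_14 (p n : ℕ) (hp : p.Prime) (hn : 1 ≤ n)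
    (m k u : ℕ) (hm : 0 < m) (hmk : m < k) (hk : p ^ n ≤ 2 * k)
    (hku : k < u) (hu : u < p ^ n)
    (j : ℕ) (hj : j = padicValNat p u) :
    ((∀ s, s < p ^ n → s ≠ 0 → preceq p s u → u - s < m) ↔ u - p ^ j < m) ∧
    ((u - p ^ j < m ∧ m < u) ↔
      (u = p ^ j * ((m + p ^ j - 1) / p ^ j) ∧ padicValNat p m < j)) :=
  stmt_14_general p n hp m k u hm hku hu j hj
end

section
/- Let p be prime, n ≥ 1, and a_1,...,a_n ∈ ℤ. Define 𝔟′ : {0,...,p−1}^n → ℤ by 𝔟′(x_1,...,x_n) = Σ a_i x_i. Then the composite (x ↦ 𝔟′(x) mod p^n) is a bijection from {0,...,p−1}^n onto ℤ/p^nℤ if and only if, after a permutation of the indices, v_p(a_i) = n − i for 1 ≤ i ≤ n. -/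
/-!
Write `v` for the `p`-adic valuation `emultiplicity (p : ℤ)`. If `v (a (e i)) = n - 1 - i`,
let `x ≠ y` be digit vectors with `p ^ n ∣ ∑ a i * (x i - y i)`. Among the indices where the
digits differ, the one of smallest valuation gives a term of exact valuation `< n`, while every
other term is divisible by a higher power of `p`; contradiction. So the map is injective, hence
bijective since both sides have `p ^ n` elements.

Conversely, for `m < n` let `ψ` be the character `y ↦ exp (2πi y / p ^ (m + 1))` of `ℤ/p^n`.
Bijectivity turns `∑ y, ψ y = 0` into `∏ i, ∑ j < p, ψ (a i) ^ j = 0`, so some `ψ (a i)` is a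
nontrivial `p`-th root of unity, which says exactly `v (a i) = m`. Every valuation `0, …, n - 1`
thus occurs among the `n` coefficients, and they are matched by a permutation.
-/

open Finset Function

theorem pow_eq_one_and_ne_one_of_geom_sum_eq_zero {R : Type*} [CommRing R] {x : R} {p : ℕ}
    (hp : (p : R) ≠ 0) (h : ∑ j ∈ range p, x ^ j = 0) : x ^ p = 1 ∧ x ≠ 1 := by
  refine ⟨?_, fun hx => hp ?_⟩
  · simpa [h, sub_eq_zero] using (geom_sum_mul x p).symm
  · simpa [hx] using h

theorem AddChar.map_sum_eq_prod {A M ι : Type*} [AddCommMonoid A] [CommMonoid M]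
    (ψ : AddChar A M) (s : Finset ι) (f : ι → A) : ψ (∑ i ∈ s, f i) = ∏ i ∈ s, ψ (f i) := by
  classical
  induction s using Finset.induction with
  | empty => simp
  | insert _ _ h ih => rw [sum_insert h, prod_insert h, AddChar.map_add_eq_mul, ih]

theorem AddChar.exists_geom_sum_eq_zero_of_bijective {G R ι : Type*} [AddCommGroup G] [Fintype G]
    [CommRing R] [IsDomain R] [Fintype ι] {ψ : AddChar G R} (hψ : ψ ≠ 1)
    {p : ℕ} {a : ι → G} (h : Bijective fun x : ι → Fin p => ∑ i, (x i : ℕ) • a i) :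
    ∃ i, ∑ j ∈ range p, ψ (a i) ^ j = 0 := by
  classical
  have hprod : ∏ i, ∑ j : Fin p, ψ (a i) ^ (j : ℕ) = 0 := calc
    _ = ∑ x : ι → Fin p, ψ (∑ i, (x i : ℕ) • a i) := by
      simp only [prod_univ_sum, Fintype.piFinset_univ, AddChar.map_sum_eq_prod,
        AddChar.map_nsmul_eq_pow]
    _ = ∑ g, ψ g := Fintype.sum_bijective _ h _ _ fun _ => rfl
    _ = 0 := AddChar.sum_eq_zero_of_ne_one hψ
  obtain ⟨i, -, hi⟩ := prod_eq_zero_iff.mp hprod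
  exact ⟨i, by rwa [← Fin.sum_univ_eq_sum_range]⟩

/-- The character `y ↦ exp (2πi y / d)` of `ZMod N`, for `d ∣ N`. -/
noncomputable def ZMod.stdAddCharOfDvd {N d : ℕ} [NeZero d] (h : d ∣ N) : AddChar (ZMod N) ℂ :=
  ZMod.stdAddChar.compAddMonoidHom (ZMod.castHom h (ZMod d)).toAddMonoidHom

theorem ZMod.stdAddCharOfDvd_intCast_eq_one_iff {N d : ℕ} [NeZero d] (h : d ∣ N) (a : ℤ) :
    stdAddCharOfDvd h a = 1 ↔ (d : ℤ) ∣ a := by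
  rw [stdAddCharOfDvd, AddChar.compAddMonoidHom_apply, RingHom.toAddMonoidHom_eq_coe,
    AddMonoidHom.coe_coe, map_intCast, ← AddChar.map_zero_eq_one (stdAddChar (N := d)),
    injective_stdAddChar.eq_iff, ZMod.intCast_zmod_eq_zero_iff_dvd]

theorem Int.eq_zero_of_pow_dvd_sum_mul {ι : Type*} [Fintype ι] {p n : ℕ} (hp : p.Prime)
    {b d : ι → ℤ} (hb : Injective fun i => emultiplicity (p : ℤ) (b i))
    (hbn : ∀ i, emultiplicity (p : ℤ) (b i) < n) (hd : ∀ i, |d i| < p)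
    (hdvd : (p : ℤ) ^ n ∣ ∑ i, b i * d i) : d = 0 := by
  classical
  have hprime : Prime (p : ℤ) := Nat.prime_iff_prime_int.mp hp
  by_contra hne
  obtain ⟨i, hi, hmin⟩ := (univ.filter fun i => d i ≠ 0).exists_min_image
    (fun i => emultiplicity (p : ℤ) (b i)) (by simpa [Finset.Nonempty, funext_iff] using hne)
  obtain ⟨m, hm⟩ : ∃ m : ℕ, emultiplicity (p : ℤ) (b i) = m :=
    ENat.ne_top_iff_exists.mp (hbn i).ne_top |>.imp fun _ h => h.symm
  have hmn : m + 1 ≤ n := by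
    have := hbn i; rw [hm] at this; exact_mod_cast Order.add_one_le_of_lt this
  have hpd : ¬ (p : ℤ) ∣ d i := fun h =>
    (mem_filter.mp hi).2 (Int.eq_zero_of_abs_lt_dvd h (hd i))
  have hlead : emultiplicity (p : ℤ) (b i * d i) = m := by
    rw [emultiplicity_mul hprime, hm, emultiplicity_eq_zero.mpr hpd, add_zero]
  have hrest : (p : ℤ) ^ (m + 1) ∣ ∑ j ∈ univ.erase i, b j * d j := by
    refine dvd_sum fun j hj => ?_
    by_cases hdj : d j = 0
    · simp [hdj]
    have hlt : emultiplicity (p : ℤ) (b i) < emultiplicity (p : ℤ) (b j) :=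
      (hmin j (by simp [hdj])).lt_of_ne fun h => (ne_of_mem_erase hj) (hb h).symm
    rw [hm] at hlt
    exact (pow_dvd_of_le_emultiplicity (Order.add_one_le_of_lt hlt)).mul_right _
  have hsum : (p : ℤ) ^ (m + 1) ∣ ∑ j, b j * d j := (pow_dvd_pow _ hmn).trans hdvd
  rw [← add_sum_erase _ _ (mem_univ i)] at hsum
  exact (emultiplicity_eq_coe.mp hlead).2 ((dvd_add_left hrest).mp hsum)

theorem exists_emultiplicity_eq_of_bijective {ι : Type*} [Fintype ι] {p n : ℕ}
    (hp : p.Prime) {a : ι → ℤ}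
    (h : Bijective fun x : ι → Fin p => (((∑ i, a i * (x i : ℤ)) : ℤ) : ZMod (p ^ n)))
    {m : ℕ} (hm : m < n) : ∃ i, emultiplicity (p : ℤ) (a i) = m := by
  have : NeZero (p ^ n) := ⟨pow_ne_zero _ hp.ne_zero⟩
  have : NeZero (p ^ (m + 1)) := ⟨pow_ne_zero _ hp.ne_zero⟩
  set ψ := ZMod.stdAddCharOfDvd (N := p ^ n) (pow_dvd_pow p hm)
  have hψ_apply (c : ℤ) : ψ c = 1 ↔ (p : ℤ) ^ (m + 1) ∣ c := by
    rw [ZMod.stdAddCharOfDvd_intCast_eq_one_iff]; push_cast; rfl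
  have hψ : ψ ≠ 1 := AddChar.ne_one_iff.mpr ⟨1, fun h1 => by
    have := (hψ_apply 1).mp (by exact_mod_cast h1)
    exact (Nat.one_lt_pow m.succ_ne_zero hp.one_lt).ne'
      (Nat.dvd_one.mp (by exact_mod_cast this))⟩
  have hmap : (fun x : ι → Fin p => (((∑ i, a i * (x i : ℤ)) : ℤ) : ZMod (p ^ n))) =
      fun x => ∑ i, (x i : ℕ) • (a i : ZMod (p ^ n)) := by
    ext x; push_cast; simp [mul_comm]
  rw [hmap] at h
  obtain ⟨i, hi⟩ := AddChar.exists_geom_sum_eq_zero_of_bijective hψ h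
  obtain ⟨hpow, hne⟩ := pow_eq_one_and_ne_one_of_geom_sum_eq_zero
    (by exact_mod_cast hp.ne_zero) hi
  rw [← AddChar.map_nsmul_eq_pow, nsmul_eq_mul, ← Int.cast_natCast, ← Int.cast_mul,
    hψ_apply, pow_succ, mul_comm (p : ℤ)] at hpow
  refine ⟨i, emultiplicity_eq_coe.mpr ⟨?_, fun hdvd => hne ((hψ_apply _).mpr hdvd)⟩⟩
  exact (mul_dvd_mul_iff_right (by exact_mod_cast hp.ne_zero)).mp hpow

theorem injective_sum_mul_of_emultiplicity {ι : Type*} [Fintype ι] {p n : ℕ} (hp : p.Prime)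
    {a : ι → ℤ} (ha : Injective fun i => emultiplicity (p : ℤ) (a i))
    (han : ∀ i, emultiplicity (p : ℤ) (a i) < n) :
    Injective fun x : ι → Fin p => (((∑ i, a i * (x i : ℤ)) : ℤ) : ZMod (p ^ n)) := by
  intro x y hxy
  have hdvd : (p : ℤ) ^ n ∣ ∑ i, a i * ((x i : ℤ) - y i) := by
    simp only [mul_sub, sum_sub_distrib]
    exact_mod_cast (ZMod.intCast_eq_intCast_iff_dvd_sub _ _ _).mp hxy.symm
  have hzero := Int.eq_zero_of_pow_dvd_sum_mul hp ha han (fun i => ?_) hdvd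
  · ext i; simpa [sub_eq_zero] using congrFun hzero i
  · have := (x i).isLt; have := (y i).isLt
    rw [abs_lt]; constructor <;> omega

theorem stmt_17_general (p n : ℕ) (hp : p.Prime) (a : Fin n → ℤ) :
    Function.Bijective
      (fun x : Fin n → Fin p => (((∑ i, a i * (x i : ℤ)) : ℤ) : ZMod (p ^ n))) ↔
    ∃ e : Equiv.Perm (Fin n), ∀ i : Fin n,
      ((p : ℤ) ^ (n - 1 - (i : ℕ)) ∣ a (e i)) ∧
      ¬ ((p : ℤ) ^ (n - (i : ℕ)) ∣ a (e i)) := by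
  have hexact (i : Fin n) (c : ℤ) : ((p : ℤ) ^ (n - 1 - (i : ℕ)) ∣ c ∧
      ¬ (p : ℤ) ^ (n - (i : ℕ)) ∣ c) ↔ emultiplicity (p : ℤ) c = ((n - 1 - i : ℕ) : ℕ∞) := by
    rw [emultiplicity_eq_coe, show n - 1 - (i : ℕ) + 1 = n - i by omega]
  have hrev : Injective fun i : Fin n => n - 1 - (i : ℕ) := fun i j h => by
    have := i.isLt; have := j.isLt; simp only at h; ext; omega
  simp_rw [hexact]
  constructor
  · intro h
    choose g hg using fun i : Fin n => exists_emultiplicity_eq_of_bijective hp h (m := n - 1 - i)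
      (by omega)
    have hg_inj : Injective g := fun i j hij =>
      hrev (Nat.cast_injective (R := ℕ∞) (by rw [← hg i, ← hg j, hij]))
    exact ⟨Equiv.ofBijective g hg_inj.bijective_of_finite, hg⟩
  · rintro ⟨e, he⟩
    have : NeZero (p ^ n) := ⟨pow_ne_zero _ hp.ne_zero⟩
    have hv (i : Fin n) : emultiplicity (p : ℤ) (a i) = ((n - 1 - e.symm i : ℕ) : ℕ∞) := by
      simpa using he (e.symm i)
    refine (Fintype.bijective_iff_injective_and_card _).mpr ⟨?_, by simp [ZMod.card]⟩
    refine injective_sum_mul_of_emultiplicity hp (fun i j hij => ?_) (fun i => ?_)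
    · exact e.symm.injective <|
        hrev (Nat.cast_injective (R := ℕ∞) (by rw [← hv, ← hv]; exact hij))
    · rw [hv]; exact_mod_cast (by omega : n - 1 - (e.symm i : ℕ) < n)

theorem stmt_17 (p n : ℕ) (hp : p.Prime) (hn : 1 ≤ n) (a : Fin n → ℤ) :
    Function.Bijective
      (fun x : Fin n → Fin p => (((∑ i, a i * (x i : ℤ)) : ℤ) : ZMod (p ^ n))) ↔
    ∃ e : Equiv.Perm (Fin n), ∀ i : Fin n,
      ((p : ℤ) ^ (n - 1 - (i : ℕ)) ∣ a (e i)) ∧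
      ¬ ((p : ℤ) ^ (n - (i : ℕ)) ∣ a (e i)) :=
  stmt_17_general p n hp a
end
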